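/- (Pareto efficiency under quasi-concavity) Suppose each platform i ∈ I has a quasi-concave, differentiable valuation v_i : [0,1]^{C_i} → [0,∞) that is decreasing in its own coordinate and strictly increasing in the coordinates of l ∈ C_{-i}; the government's valuation v₀ : [0,1] → [0,∞) is quasi-concave, differentiable and increasing; and each average trust function h_i : [0,1] → [0,1] is differentiable, increasing and concave. Then every generalized Nash equilibrium m* of the game induced by the misinformation-filtering mechanism is Pareto efficient: there do not exist filters a ∈ [0,1]^{I}, a lower bound a₀ ∈ [0,1] with a₀ ≤ Σ_{i∈I} n_i·h_i(a_i), and transfers (t_j)_{j∈J} ∈ ℝ^{J} with Σ_{j∈J} t_j = 0 and 0 ≤ t₀ ≤ b₀, such that v_i(a_k : k ∈ C_i) − t_i ≥ u_i(m*) for every i ∈ I and v₀(a₀) − t₀ ≥ u₀(m*), with at least one of these inequalities strict. -/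

import Mathlib

open Finset

noncomputable section

namespace MisinfoFilter

/-- A message of a social-media platform: the proposed minimum average trust `ht`,
the proposed prices `pP l` for the filters of the other competing platforms,
the proposed price `pG` for the government's lower bound, the proposed filters `a k`
for the competing platforms and the proposed lower bound `aG` for the government. -/
structure PlatformMsg (N : ℕ) where
  ht : ℝ
  pP : Fin N → ℝ
  pG : ℝ
  a : Fin N → ℝ
  aG : ℝ

/-- The government's message: a proposed price `pG` and a proposed lower bound `aG`. -/
structure GovMsg where
  pG : ℝ
  aG : ℝ

/-- A message profile: one message per platform and one for the government. -/
structure Profile (N : ℕ) where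
  pf : Fin N → PlatformMsg N
  gov : GovMsg

/-- Validity of a platform message: nonnegative proposed trust and prices. -/
def PlatformMsg.Valid {N : ℕ} (msg : PlatformMsg N) : Prop :=
  0 ≤ msg.ht ∧ (∀ l, 0 ≤ msg.pP l) ∧ 0 ≤ msg.pG

/-- Validity of a government message: nonnegative proposed price. -/
def GovMsg.Valid (g : GovMsg) : Prop := 0 ≤ g.pG

/-- Unilateral deviation of platform `i` to message `msg`. -/
def Profile.updPf {N : ℕ} (m : Profile N) (i : Fin N) (msg : PlatformMsg N) : Profile N :=
  ⟨Function.update m.pf i msg, m.gov⟩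

/-- Unilateral deviation of the government to message `g`. -/
def Profile.updGov {N : ℕ} (m : Profile N) (g : GovMsg) : Profile N :=
  ⟨m.pf, g⟩

/-- The data of the misinformation-filtering game: `N ≥ 1` platforms, competing sets
`C i ∋ i` with `|C i| ≥ 3` and symmetric competition, user fractions `n` (positive,
summing to one), average trust functions `h i`, valuations `v i` (each depending only on
the coordinates in `C i`), the government's valuation `v0` and budget `b0 ≥ 0`. -/
structure Framework (N : ℕ) where
  hN : 1 ≤ N
  C : Fin N → Finset (Fin N)
  mem_C : ∀ i, i ∈ C i
  card_C : ∀ i, 3 ≤ (C i).card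
  symm_C : ∀ i k, i ∈ C k ↔ k ∈ C i
  n : Fin N → ℝ
  n_pos : ∀ i, 0 < n i
  n_sum : ∑ i, n i = 1
  h : Fin N → ℝ → ℝ
  v : Fin N → (Fin N → ℝ) → ℝ
  v_localized : ∀ i p q, (∀ k ∈ C i, p k = q k) → v i p = v i q
  v0 : ℝ → ℝ
  b0 : ℝ
  b0_nonneg : 0 ≤ b0

namespace Framework

variable {N : ℕ}

/-- Allocated filter `α_i(m)`: the average of proposals for `i` by the platforms in `C i`. -/
def alpha (F : Framework N) (m : Profile N) (i : Fin N) : ℝ :=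
  (∑ k ∈ F.C i, (m.pf k).a i) / ((F.C i).card : ℝ)

/-- Allocated lower bound `α₀(m)`: the average of all proposed lower bounds. -/
def alpha0 (F : Framework N) (m : Profile N) : ℝ :=
  (m.gov.aG + ∑ k, (m.pf k).aG) / ((N : ℝ) + 1)

/-- `Σ_k n_k · h̃_k`. -/
def trustSum (F : Framework N) (m : Profile N) : ℝ := ∑ k, F.n k * (m.pf k).ht

/-- Allocated minimum average trust `η_i(m)`. -/
def eta (F : Framework N) (m : Profile N) (i : Fin N) : ℝ :=
  min ((F.n i * (m.pf i).ht / F.trustSum m) * F.alpha0 m) 1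

/-- Allocated price `π_target^payer` paid by `payer` per unit of the filter of `target`:
the average of the prices proposed for `target` by the platforms in `C target`
other than `target` and `payer`. -/
def price (F : Framework N) (m : Profile N) (payer target : Fin N) : ℝ :=
  (∑ k ∈ ((F.C target).erase target).erase payer, (m.pf k).pP target) /
    (((F.C target).card : ℝ) - 2)

/-- Allocated government price `π₀`. -/
def price0 (F : Framework N) (m : Profile N) : ℝ := (∑ i, (m.pf i).pG) / (N : ℝ)

/-- Average proposal `ã_l^{-i}` for platform `l` by the platforms in `C l` other than `i`. -/
def aAvgMinus (F : Framework N) (m : Profile N) (i l : Fin N) : ℝ :=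
  (∑ k ∈ (F.C l).erase i, (m.pf k).a l) / (((F.C l).card : ℝ) - 1)

/-- Average proposal `ã₀^{-i}` of lower bounds by all players except platform `i`. -/
def aGAvgMinus (F : Framework N) (m : Profile N) (i : Fin N) : ℝ :=
  (m.gov.aG + ∑ k, (m.pf k).aG - (m.pf i).aG) / (N : ℝ)

/-- Tax `τ_i(m)` of platform `i`. -/
def tax (F : Framework N) (m : Profile N) (i : Fin N) : ℝ :=
  - m.gov.pG * F.eta m i
  - (∑ l ∈ (F.C i).erase i, F.price m l i) * F.alpha m i
  + ∑ l ∈ (F.C i).erase i, F.price m i l * F.alpha m l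
  + (∑ l ∈ (F.C i).erase i, (m.pf i).pP l * ((m.pf i).a l - F.aAvgMinus m i l) ^ 2)
  + (m.pf i).pG * ((m.pf i).aG - F.aGAvgMinus m i) ^ 2

/-- Tax (investment) `τ₀(m)` of the government. -/
def tax0 (F : Framework N) (m : Profile N) : ℝ :=
  F.price0 m * F.alpha0 m + (m.gov.pG - F.price0 m) ^ 2

/-- Utility of platform `i`. -/
def util (F : Framework N) (m : Profile N) (i : Fin N) : ℝ :=
  F.v i (F.alpha m) - F.tax m i

/-- Utility of the government. -/
def util0 (F : Framework N) (m : Profile N) : ℝ := F.v0 (F.alpha0 m) - F.tax0 m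

/-- An admissible message profile: all messages valid and `Σ_k n_k h̃_k > 0`
(profiles with `Σ_k n_k h̃_k = 0` are excluded by the social planner). -/
def ProfileValid (F : Framework N) (m : Profile N) : Prop :=
  (∀ i, (m.pf i).Valid) ∧ m.gov.Valid ∧ 0 < F.trustSum m

/-- Generalized Nash equilibrium of the induced game: the profile is admissible, every
player's own allocation is feasible, no platform can profit by a unilateral deviation whose
allocated filter stays in its feasible set `S_i`, and the government cannot profit by a
unilateral deviation satisfying its feasibility and budget constraints. -/
def IsGNE (F : Framework N) (m : Profile N) : Prop :=
  F.ProfileValid m ∧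
  (∀ i, F.alpha m i ∈ Set.Icc (0:ℝ) 1 ∧ F.eta m i ≤ F.n i * F.h i (F.alpha m i)) ∧
  F.alpha0 m ∈ Set.Icc (0:ℝ) 1 ∧ F.price0 m * F.alpha0 m ≤ F.b0 ∧
  (∀ (i : Fin N) (msg : PlatformMsg N), msg.Valid →
    0 < F.trustSum (m.updPf i msg) →
    F.alpha (m.updPf i msg) i ∈ Set.Icc (0:ℝ) 1 →
    F.eta (m.updPf i msg) i ≤ F.n i * F.h i (F.alpha (m.updPf i msg) i) →
    F.util (m.updPf i msg) i ≤ F.util m i) ∧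
  (∀ g : GovMsg, g.Valid →
    F.alpha0 (m.updGov g) ∈ Set.Icc (0:ℝ) 1 →
    F.price0 (m.updGov g) * F.alpha0 (m.updGov g) ≤ F.b0 →
    F.util0 (m.updGov g) ≤ F.util0 m)

end Framework

/-- The standing regularity assumptions of the model: each `h i` maps `[0,1]` into `[0,1]`
and is strictly increasing, concave and differentiable; each valuation `v i` is nonnegative,
concave and differentiable on the box, decreasing in the own coordinate and strictly
increasing in the coordinates of the other competing platforms; the government's valuation
`v0` is nonnegative, increasing, concave and differentiable on `[0,1]`. -/
structure Framework.Regular {N : ℕ} (F : Framework N) : Prop where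
  h_maps : ∀ i, Set.MapsTo (F.h i) (Set.Icc 0 1) (Set.Icc 0 1)
  h_strictMono : ∀ i, StrictMonoOn (F.h i) (Set.Icc 0 1)
  h_concave : ∀ i, ConcaveOn ℝ (Set.Icc 0 1) (F.h i)
  h_diff : ∀ i, DifferentiableOn ℝ (F.h i) (Set.Icc 0 1)
  v_nonneg : ∀ i p, (∀ k, p k ∈ Set.Icc (0:ℝ) 1) → 0 ≤ F.v i p
  v_concave : ∀ i, ConcaveOn ℝ {p : Fin N → ℝ | ∀ k, p k ∈ Set.Icc (0:ℝ) 1} (F.v i)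
  v_diff : ∀ i, DifferentiableOn ℝ (F.v i) {p : Fin N → ℝ | ∀ k, p k ∈ Set.Icc (0:ℝ) 1}
  v_own_anti : ∀ i p, (∀ k, p k ∈ Set.Icc (0:ℝ) 1) →
    ∀ x y : ℝ, x ∈ Set.Icc (0:ℝ) 1 → y ∈ Set.Icc (0:ℝ) 1 → x ≤ y →
      F.v i (Function.update p i y) ≤ F.v i (Function.update p i x)
  v_other_strictMono : ∀ i l, l ∈ F.C i → l ≠ i →
    ∀ p, (∀ k, p k ∈ Set.Icc (0:ℝ) 1) →
    ∀ x y : ℝ, x ∈ Set.Icc (0:ℝ) 1 → y ∈ Set.Icc (0:ℝ) 1 → x < y →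
      F.v i (Function.update p l x) < F.v i (Function.update p l y)
  v0_nonneg : ∀ x ∈ Set.Icc (0:ℝ) 1, 0 ≤ F.v0 x
  v0_mono : MonotoneOn F.v0 (Set.Icc 0 1)
  v0_concave : ConcaveOn ℝ (Set.Icc 0 1) F.v0
  v0_diff : DifferentiableOn ℝ F.v0 (Set.Icc 0 1)

end MisinfoFilter

end

namespace MisinfoFilter

/-- The relaxed regularity assumptions: valuations are quasi-concave and differentiable
(platforms' decreasing in the own coordinate and strictly increasing in the others',
the government's increasing), and each average trust function maps `[0,1]` into `[0,1]`
and is differentiable, increasing and concave. -/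
structure Framework.QuasiRegular {N : ℕ} (F : Framework N) : Prop where
  h_maps : ∀ i, Set.MapsTo (F.h i) (Set.Icc 0 1) (Set.Icc 0 1)
  h_mono : ∀ i, MonotoneOn (F.h i) (Set.Icc 0 1)
  h_concave : ∀ i, ConcaveOn ℝ (Set.Icc 0 1) (F.h i)
  h_diff : ∀ i, DifferentiableOn ℝ (F.h i) (Set.Icc 0 1)
  v_nonneg : ∀ i p, (∀ k, p k ∈ Set.Icc (0:ℝ) 1) → 0 ≤ F.v i p
  v_quasiconcave : ∀ i,
    QuasiconcaveOn ℝ {p : Fin N → ℝ | ∀ k, p k ∈ Set.Icc (0:ℝ) 1} (F.v i)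
  v_diff : ∀ i, DifferentiableOn ℝ (F.v i) {p : Fin N → ℝ | ∀ k, p k ∈ Set.Icc (0:ℝ) 1}
  v_own_anti : ∀ i p, (∀ k, p k ∈ Set.Icc (0:ℝ) 1) →
    ∀ x y : ℝ, x ∈ Set.Icc (0:ℝ) 1 → y ∈ Set.Icc (0:ℝ) 1 → x ≤ y →
      F.v i (Function.update p i y) ≤ F.v i (Function.update p i x)
  v_other_strictMono : ∀ i l, l ∈ F.C i → l ≠ i →
    ∀ p, (∀ k, p k ∈ Set.Icc (0:ℝ) 1) →
    ∀ x y : ℝ, x ∈ Set.Icc (0:ℝ) 1 → y ∈ Set.Icc (0:ℝ) 1 → x < y →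
      F.v i (Function.update p l x) < F.v i (Function.update p l y)
  v0_nonneg : ∀ x ∈ Set.Icc (0:ℝ) 1, 0 ≤ F.v0 x
  v0_mono : MonotoneOn F.v0 (Set.Icc 0 1)
  v0_quasiconcave : QuasiconcaveOn ℝ (Set.Icc 0 1) F.v0
  v0_diff : DifferentiableOn ℝ F.v0 (Set.Icc 0 1)

/-! At an equilibrium the government's price proposal equals the allocated price `π₀`, so
every platform `i` can steer the allocation of its competitors and of the lower bound to any
target while paying exactly the competitive prices; in particular it can obtain the filters
`a` together with the lower bound that makes its trust constraint bind at `n_i h_i(a_i)`.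
Summing these deviation bounds over the platforms, the cross payments cancel and
`Σ v_i(a) + π₀ Σ n_i h_i(a_i) ≤ Σ u_i(m)`, while the government's deviation to `a₀` gives
`v₀(a₀) - π₀ a₀ ≤ u₀(m)`. A Pareto improvement would force `π₀ Σ n_i h_i(a_i) ≤ t₀ ≤ π₀ a₀`
with one inequality strict, contradicting `a₀ ≤ Σ n_i h_i(a_i)`. -/

theorem _root_.Finset.sum_apply_update_of_mem {ι β M : Type*} [DecidableEq ι] [AddCommMonoid M]
    (f : ι → β) {i : ι} (b : β) {s : Finset ι} (hi : i ∈ s) (g : ι → β → M) :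
    ∑ k ∈ s, g k (Function.update f i b k) = g i b + ∑ k ∈ s.erase i, g k (f k) := by
  rw [← Finset.add_sum_erase s _ hi, Function.update_self]
  congr 1
  exact Finset.sum_congr rfl fun k hk => by rw [Function.update_of_ne (Finset.ne_of_mem_erase hk)]

namespace Framework

variable {N : ℕ} (F : Framework N)

theorem n_le_one (i : Fin N) : F.n i ≤ 1 :=
  F.n_sum ▸ Finset.single_le_sum (fun k _ => (F.n_pos k).le) (Finset.mem_univ i)

/-- What platform `i` receives for its own filter `a i` minus what it pays for the filters
of its competitors, at the prices allocated by `m`. -/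
noncomputable def netCrossIncome (m : Profile N) (a : Fin N → ℝ) (i : Fin N) : ℝ :=
  (∑ l ∈ (F.C i).erase i, F.price m l i) * a i - ∑ l ∈ (F.C i).erase i, F.price m i l * a l

theorem sum_netCrossIncome (m : Profile N) (a : Fin N → ℝ) :
    ∑ i, F.netCrossIncome m a i = 0 := by
  have hswap : ∑ i, ∑ l ∈ (F.C i).erase i, F.price m l i * a i
      = ∑ i, ∑ l ∈ (F.C i).erase i, F.price m i l * a l := by
    refine Finset.sum_comm' fun i l => ?_
    simp only [Finset.mem_univ, true_and, and_true, Finset.mem_erase]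
    exact ⟨fun ⟨hli, hl⟩ => ⟨Ne.symm hli, (F.symm_C i l).mpr hl⟩,
      fun ⟨hil, hi⟩ => ⟨Ne.symm hil, (F.symm_C l i).mpr hi⟩⟩
  simp only [netCrossIncome, Finset.sum_sub_distrib, Finset.sum_mul, hswap, sub_self]

theorem price0_nonneg {m : Profile N} (hm : F.ProfileValid m) : 0 ≤ F.price0 m :=
  div_nonneg (Finset.sum_nonneg fun k _ => (hm.1 k).2.2) (Nat.cast_nonneg N)

theorem price_updPf {m : Profile N} {i payer target : Fin N} (msg : PlatformMsg N)
    (hi : i = payer ∨ i = target) :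
    F.price (m.updPf i msg) payer target = F.price m payer target := by
  unfold price
  congr 1
  refine Finset.sum_congr rfl fun k hk => ?_
  have hki : k ≠ i := by
    rcases hi with rfl | rfl
    · exact Finset.ne_of_mem_erase hk
    · exact Finset.ne_of_mem_erase (Finset.mem_of_mem_erase hk)
  simp only [Profile.updPf, Function.update_of_ne hki]

section Government

variable {F} {m : Profile N}

theorem util0_updGov_of_pG_eq {g : GovMsg} (hg : g.pG = F.price0 m) :
    F.util0 (m.updGov g)
      = F.v0 (F.alpha0 (m.updGov g)) - F.price0 m * F.alpha0 (m.updGov g) := by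
  simp only [util0, tax0, Profile.updGov, hg]
  rw [show F.price0 ⟨m.pf, g⟩ = F.price0 m from rfl]
  ring

theorem IsGNE.v0_sub_le_util0 (hm : F.IsGNE m) {x : ℝ} (hx : x ∈ Set.Icc (0 : ℝ) 1)
    (hbudget : F.price0 m * x ≤ F.b0) : F.v0 x - F.price0 m * x ≤ F.util0 m := by
  set g : GovMsg := ⟨F.price0 m, ((N : ℝ) + 1) * x - ∑ k, (m.pf k).aG⟩
  have hα : F.alpha0 (m.updGov g) = x := by
    simp only [alpha0, Profile.updGov, g]
    field_simp
    ring
  have hdev := hm.2.2.2.2.2 g (F.price0_nonneg hm.1) (hα ▸ hx) (hα ▸ hbudget)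
  rwa [util0_updGov_of_pG_eq rfl, hα] at hdev

/-- Otherwise the government could keep its proposed bound and lower its tax by proposing
the price `π₀`. -/
theorem IsGNE.gov_pG_eq_price0 (hm : F.IsGNE m) : m.gov.pG = F.price0 m := by
  have hdev := hm.v0_sub_le_util0 hm.2.2.1 hm.2.2.2.1
  simp only [util0, tax0] at hdev
  nlinarith [sq_nonneg (m.gov.pG - F.price0 m)]

end Government

/-- The message of platform `i` that, given the other messages of `m`, makes the allocated
filter of every `l ∈ C i` equal to `a l` and the allocated lower bound equal to `z`, at zero
proposed prices and unit proposed trust. -/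
noncomputable def deviationMsg (m : Profile N) (i : Fin N) (a : Fin N → ℝ) (z : ℝ) :
    PlatformMsg N where
  ht := 1
  pP := 0
  pG := 0
  a l := (F.C l).card * a l - ∑ k ∈ (F.C l).erase i, (m.pf k).a l
  aG := ((N : ℝ) + 1) * z - m.gov.aG - ∑ k ∈ Finset.univ.erase i, (m.pf k).aG

section Deviation

variable (m : Profile N) (i : Fin N) (a : Fin N → ℝ) (z : ℝ)

theorem alpha_updPf_deviationMsg {l : Fin N} (hl : l ∈ F.C i) :
    F.alpha (m.updPf i (F.deviationMsg m i a z)) l = a l := by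
  have hcard : ((F.C l).card : ℝ) ≠ 0 := by
    have := F.card_C l
    positivity
  simp only [alpha, Profile.updPf]
  rw [Finset.sum_apply_update_of_mem m.pf _ ((F.symm_C i l).mpr hl) fun k p => p.a l]
  simp only [deviationMsg]
  field_simp
  ring

theorem alpha0_updPf_deviationMsg :
    F.alpha0 (m.updPf i (F.deviationMsg m i a z)) = z := by
  simp only [alpha0, Profile.updPf]
  rw [Finset.sum_apply_update_of_mem m.pf _ (Finset.mem_univ i) fun _ p => p.aG]
  simp only [deviationMsg]
  field_simp
  ring

theorem trustSum_updPf_deviationMsg :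
    F.trustSum (m.updPf i (F.deviationMsg m i a z))
      = F.n i + ∑ k ∈ Finset.univ.erase i, F.n k * (m.pf k).ht := by
  simp only [trustSum, Profile.updPf]
  rw [Finset.sum_apply_update_of_mem m.pf _ (Finset.mem_univ i) fun k p => F.n k * p.ht]
  simp only [deviationMsg, mul_one]

theorem tax_updPf_deviationMsg :
    F.tax (m.updPf i (F.deviationMsg m i a z)) i
      = -m.gov.pG * F.eta (m.updPf i (F.deviationMsg m i a z)) i - F.netCrossIncome m a i := by
  set m' := m.updPf i (F.deviationMsg m i a z)
  have hpf : m'.pf i = F.deviationMsg m i a z := Function.update_self ..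
  have hα : ∀ l ∈ F.C i, F.alpha m' l = a l :=
    fun _ hl => F.alpha_updPf_deviationMsg m i a z hl
  have hreceived :
      ∑ l ∈ (F.C i).erase i, F.price m' l i = ∑ l ∈ (F.C i).erase i, F.price m l i :=
    Finset.sum_congr rfl fun _ _ => F.price_updPf _ (Or.inr rfl)
  have hpaid : ∑ l ∈ (F.C i).erase i, F.price m' i l * F.alpha m' l
      = ∑ l ∈ (F.C i).erase i, F.price m i l * a l :=
    Finset.sum_congr rfl fun l hl => by
      rw [F.price_updPf _ (Or.inl rfl), hα l (Finset.mem_of_mem_erase hl)]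
  simp only [tax, netCrossIncome, hpf, hα i (F.mem_C i), hreceived, hpaid, deviationMsg,
    Pi.zero_apply, zero_mul, Finset.sum_const_zero]
  simp only [m', Profile.updPf]
  ring

end Deviation

variable {F} in
/-- Platform `i` deviates to `deviationMsg`, choosing the lower bound so that its allocated
trust is exactly `n_i h_i(a_i)`; this keeps the deviation inside its feasible set. -/
theorem IsGNE.v_add_le_util {m : Profile N} (hm : F.IsGNE m) {a : Fin N → ℝ} {i : Fin N}
    (ha : a i ∈ Set.Icc (0 : ℝ) 1) (hh : F.h i (a i) ∈ Set.Icc (0 : ℝ) 1) :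
    F.v i a + F.price0 m * (F.n i * F.h i (a i)) + F.netCrossIncome m a i ≤ F.util m i := by
  set T := F.n i + ∑ k ∈ Finset.univ.erase i, F.n k * (m.pf k).ht
  set msg := F.deviationMsg m i a (F.h i (a i) * T)
  have hT : 0 < T :=
    add_pos_of_pos_of_nonneg (F.n_pos i)
      (Finset.sum_nonneg fun k _ => mul_nonneg (F.n_pos k).le (hm.1.1 k).1)
  have hts : F.trustSum (m.updPf i msg) = T := F.trustSum_updPf_deviationMsg m i a _
  have hα0 : F.alpha0 (m.updPf i msg) = F.h i (a i) * T := F.alpha0_updPf_deviationMsg m i a _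
  have hαi : F.alpha (m.updPf i msg) i = a i := F.alpha_updPf_deviationMsg m i a _ (F.mem_C i)
  have hη : F.eta (m.updPf i msg) i = F.n i * F.h i (a i) := by
    have hle : F.n i * F.h i (a i) ≤ 1 := by
      nlinarith [F.n_le_one i, F.n_pos i, hh.1, hh.2]
    have hht : ((m.updPf i msg).pf i).ht = 1 := by
      simp only [Profile.updPf, Function.update_self, msg, deviationMsg]
    rw [eta, hts, hα0, hht, mul_one, div_mul_eq_mul_div, mul_div_assoc,
      mul_div_cancel_right₀ _ hT.ne']
    exact min_eq_left hle
  have hdev := hm.2.2.2.2.1 i msg ⟨zero_le_one, fun _ => le_rfl, le_rfl⟩ (hts ▸ hT)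
    (hαi ▸ ha) (by rw [hη, hαi])
  have hv : F.v i (F.alpha (m.updPf i msg)) = F.v i a :=
    F.v_localized i _ a fun l hl => F.alpha_updPf_deviationMsg m i a _ hl
  rw [util, hv, F.tax_updPf_deviationMsg, hη, hm.gov_pG_eq_price0] at hdev
  linarith

end Framework

/-- **Pareto efficiency under quasi-concavity.** Under the relaxed
(quasi-concave) regularity assumptions, every GNE `m` of the induced game is Pareto
efficient: there is no feasible choice of filters `a ∈ [0,1]^I`, lower bound
`a₀ ∈ [0,1]` with `a₀ ≤ Σ_i n_i·h_i(a_i)`, and budget-balanced transfers `(t₀, t)`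
with `0 ≤ t₀ ≤ b₀` that makes every player weakly better off and some player strictly
better off than at the equilibrium. -/
theorem GNE_pareto_efficient_of_quasiconcave {N : ℕ} (F : Framework N)
    (hq : F.QuasiRegular) (m : Profile N) (hm : F.IsGNE m) :
    ¬ ∃ (a0 : ℝ) (a : Fin N → ℝ) (t0 : ℝ) (t : Fin N → ℝ),
      a0 ∈ Set.Icc (0:ℝ) 1 ∧ (∀ i, a i ∈ Set.Icc (0:ℝ) 1) ∧
      a0 ≤ ∑ i, F.n i * F.h i (a i) ∧
      t0 + ∑ i, t i = 0 ∧ 0 ≤ t0 ∧ t0 ≤ F.b0 ∧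
      (∀ i, F.util m i ≤ F.v i a - t i) ∧
      F.util0 m ≤ F.v0 a0 - t0 ∧
      ((∃ i, F.util m i < F.v i a - t i) ∨ F.util0 m < F.v0 a0 - t0) := by
  rintro ⟨a0, a, t0, t, ha0, ha, ha0H, hbal, -, ht0b, hdomP, hdomG, hstrict⟩
  set π := F.price0 m
  have hπ : 0 ≤ π := F.price0_nonneg hm.1
  have hplatforms : ∑ i, F.v i a + π * ∑ i, F.n i * F.h i (a i) ≤ ∑ i, F.util m i := by
    have := Finset.sum_le_sum fun i (_ : i ∈ Finset.univ) =>
      hm.v_add_le_util (ha i) (hq.h_maps i (ha i))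
    rwa [Finset.sum_add_distrib, Finset.sum_add_distrib, F.sum_netCrossIncome, add_zero,
      ← Finset.mul_sum] at this
  have htransfers : ∑ i, (F.v i a - t i) = ∑ i, F.v i a + t0 := by
    rw [Finset.sum_sub_distrib]
    linarith
  have hsum := Finset.sum_le_sum fun i (_ : i ∈ Finset.univ) => hdomP i
  have hπa0 : π * a0 ≤ π * ∑ i, F.n i * F.h i (a i) := mul_le_mul_of_nonneg_left ha0H hπ
  have hgov := hm.v0_sub_le_util0 ha0 (by linarith)
  rcases hstrict with ⟨j, hj⟩ | hgov_strict
  · have := Finset.sum_lt_sum (fun i _ => hdomP i) ⟨j, Finset.mem_univ j, hj⟩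
    linarith
  · linarith

end MisinfoFilter
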